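/- arXiv:0912.4758 — 4 statements merged into one kernel-verified Lean document; each statement's English description precedes it below -/
import Mathlib

section
/- Let q ∈ ℂ with |q| < 1, let d be an odd positive integer, let χ : ℕ → ℂ be d-periodic, and let x ≥ 0 be a real number with q^x defined as exp(x log q) (or take x ∈ ℕ). Then for every n ∈ ℕ, 2 ∑_{m=0}^∞ χ(m) (−1)^m [m+x]_q^n = (2/(1−q)^n) ∑_{a=0}^{d−1} χ(a) (−1)^a ∑_{l=0}^n C(n,l) (−1)^l q^{l(a+x)} / (1 + q^{ld}). -/
/-!
Write `ψ m = χ m (-1)^m`; as `d` is odd, `ψ (m + d) = -ψ m`. Expanding `[m+x]_q^n` binomially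
turns the Abel-weighted series `∑ 2 ψ m [m+x]_q^n r^m` into a finite combination of the power
series `∑ ψ m (r q^l)^m`, and comparing such a series with its shift by `d` sums it to the
rational function `(∑_{a<d} ψ a z^a) / (1 + z^d)` at `z = r q^l`. The denominator does not vanish
at `z = q^l`, so the limit `r → 1⁻` is obtained by substituting `r = 1`.
-/

open Filter Finset Function Topology

/-- Abel summation: `HasAbelSum a S` means `∑ a(m) r^m → S` as `r → 1⁻`. -/
def HasAbelSum (a : ℕ → ℂ) (S : ℂ) : Prop :=
  Tendsto (fun r : ℝ => ∑' m : ℕ, a m * (r : ℂ) ^ m) (nhdsWithin 1 (Set.Iio 1)) (nhds S)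

theorem one_add_ne_zero_of_norm_lt_one {R : Type*} [SeminormedRing R] [NormOneClass R] {w : R}
    (hw : ‖w‖ < 1) : 1 + w ≠ 0 := fun h => by
  rw [eq_neg_of_add_eq_zero_right h, norm_neg, norm_one] at hw
  exact hw.false

theorem Function.Periodic.mul_neg_one_pow_antiperiodic {R : Type*} [Ring R] {χ : ℕ → R} {d : ℕ}
    (hχ : Periodic χ d) (hd : Odd d) : Antiperiodic (fun m => χ m * (-1) ^ m) d := fun m => by
  dsimp only
  rw [hχ m, pow_add, hd.neg_one_pow, mul_neg_one, mul_neg]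

theorem one_sub_pow_add_pow_mul_pow {R : Type*} [CommRing R] (q r : R) (m x n : ℕ) :
    (1 - q ^ (m + x)) ^ n * r ^ m
      = ∑ l ∈ range (n + 1), n.choose l * (-1) ^ l * q ^ (l * x) * (r * q ^ l) ^ m := by
  rw [sub_eq_neg_add, add_pow, sum_mul]
  refine sum_congr rfl fun l _ => ?_
  rw [neg_pow, ← pow_mul, mul_pow, ← pow_mul]
  ring

section NormedField

variable {𝕜 : Type*} [NormedField 𝕜]

theorem one_add_pow_ne_zero [CharZero 𝕜] {q : 𝕜} (hq : ‖q‖ < 1) (k : ℕ) : 1 + q ^ k ≠ 0 := by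
  rcases k.eq_zero_or_pos with rfl | hk
  · norm_num
  · exact one_add_ne_zero_of_norm_lt_one <| by
      rw [norm_pow]; exact pow_lt_one₀ (norm_nonneg q) hq hk.ne'

variable [CompleteSpace 𝕜] {f : ℕ → 𝕜} {d : ℕ}

theorem Function.Periodic.summable_mul_pow (hf : Periodic f d) (hd : 0 < d) {z : 𝕜}
    (hz : ‖z‖ < 1) : Summable fun m => f m * z ^ m := by
  refine Summable.of_norm_bounded
    ((summable_geometric_of_lt_one (norm_nonneg z) hz).mul_left (∑ a ∈ range d, ‖f a‖)) fun m => ?_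
  rw [norm_mul, norm_pow, ← hf.map_mod_nat m]
  gcongr
  exact single_le_sum (f := fun a => ‖f a‖) (fun a _ => norm_nonneg _) (mem_range.2 (m.mod_lt hd))

theorem Function.Antiperiodic.hasSum_mul_pow (hf : Antiperiodic f d) (hd : 0 < d) {z : 𝕜}
    (hz : ‖z‖ < 1) :
    HasSum (fun m => f m * z ^ m) ((∑ a ∈ range d, f a * z ^ a) / (1 + z ^ d)) := by
  have hsum := hf.periodic_two_mul.summable_mul_pow (by omega) hz
  have hshift : ∀ m, f (m + d) * z ^ (m + d) = -z ^ d * (f m * z ^ m) := fun m => by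
    rw [hf m, pow_add]; ring
  have hsplit := hsum.sum_add_tsum_nat_add d
  simp only [hshift, tsum_mul_left] at hsplit
  have hden : 1 + z ^ d ≠ 0 := one_add_ne_zero_of_norm_lt_one <| by
    rw [norm_pow]; exact pow_lt_one₀ (norm_nonneg z) hz hd.ne'
  convert hsum.hasSum using 1
  rw [div_eq_iff hden]
  linear_combination hsplit

theorem Function.Antiperiodic.hasSum_mul_qNumber_pow_mul_pow (hf : Antiperiodic f d) (hd : 0 < d)
    {q : 𝕜} (hq : ‖q‖ < 1) (x n : ℕ) {r : 𝕜} (hr : ‖r‖ < 1) :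
    HasSum (fun m => f m * ((1 - q ^ (m + x)) / (1 - q)) ^ n * r ^ m)
      (∑ l ∈ range (n + 1), n.choose l * (-1) ^ l * q ^ (l * x) / (1 - q) ^ n *
        ((∑ a ∈ range d, f a * (r * q ^ l) ^ a) / (1 + (r * q ^ l) ^ d))) := by
  have hrq : ∀ l : ℕ, ‖r * q ^ l‖ < 1 := fun l => by
    rw [norm_mul, norm_pow]
    exact mul_lt_one_of_nonneg_of_lt_one_left (norm_nonneg r) hr
      (pow_le_one₀ (norm_nonneg q) hq.le)
  refine (hasSum_sum fun l _ => (hf.hasSum_mul_pow hd (hrq l)).mul_left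
    (n.choose l * (-1) ^ l * q ^ (l * x) / (1 - q) ^ n)).congr_fun fun m => ?_
  calc f m * ((1 - q ^ (m + x)) / (1 - q)) ^ n * r ^ m
      = f m / (1 - q) ^ n * ((1 - q ^ (m + x)) ^ n * r ^ m) := by rw [div_pow]; ring
    _ = _ := by
      rw [one_sub_pow_add_pow_mul_pow, mul_sum]
      exact sum_congr rfl fun l _ => by ring

end NormedField

theorem tendsto_sum_mul_div_one_add_pow {f : ℕ → ℂ} {d : ℕ} {q : ℂ} (hq : ‖q‖ < 1) (c : ℕ → ℂ)
    (s : Finset ℕ) :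
    Tendsto (fun r : ℝ => ∑ l ∈ s, c l *
        ((∑ a ∈ range d, f a * (r * q ^ l) ^ a) / (1 + (r * q ^ l) ^ d)))
      (𝓝 1) (𝓝 (∑ l ∈ s, c l * ((∑ a ∈ range d, f a * q ^ (l * a)) / (1 + q ^ (l * d))))) := by
  refine tendsto_finsetSum _ fun l _ => ?_
  have hden : 1 + ((1 : ℝ) * q ^ l : ℂ) ^ d ≠ 0 := by
    rw [Complex.ofReal_one, one_mul, ← pow_mul]; exact one_add_pow_ne_zero hq _
  have hcont : ContinuousAt (fun r : ℝ => c l *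
      ((∑ a ∈ range d, f a * (r * q ^ l) ^ a) / (1 + (r * q ^ l) ^ d))) 1 := by
    fun_prop (disch := exact hden)
  simpa only [Complex.ofReal_one, one_mul, ← pow_mul, mul_comm l] using hcont.tendsto

theorem q_euler_series_eq_general (q : ℂ) (hq : ‖q‖ < 1) (d : ℕ) (hd : Odd d)
    (χ : ℕ → ℂ) (hχ : ∀ m, χ (m + d) = χ m) (x n : ℕ) :
    HasAbelSum (fun m => 2 * χ m * (-1 : ℂ) ^ m * ((1 - q ^ (m + x)) / (1 - q)) ^ n)
      ((2 / (1 - q) ^ n) * ∑ a ∈ Finset.range d, χ a * (-1 : ℂ) ^ a *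
        ∑ l ∈ Finset.range (n + 1),
          (n.choose l : ℂ) * (-1 : ℂ) ^ l * q ^ (l * (a + x)) / (1 + q ^ (l * d))) := by
  have hperiodic : Periodic (fun m => 2 * χ m) d := fun m => congrArg (2 * ·) (hχ m)
  have hf : Antiperiodic (fun m => 2 * χ m * (-1 : ℂ) ^ m) d :=
    hperiodic.mul_neg_one_pow_antiperiodic hd
  have hlim := tendsto_sum_mul_div_one_add_pow (f := fun m => 2 * χ m * (-1 : ℂ) ^ m) (d := d) hq
    (fun l => n.choose l * (-1) ^ l * q ^ (l * x) / (1 - q) ^ n) (range (n + 1))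
  unfold HasAbelSum
  convert (hlim.mono_left nhdsWithin_le_nhds).congr' ?_ using 2
  · simp only [mul_sum, sum_div]
    rw [sum_comm]
    refine sum_congr rfl fun a _ => sum_congr rfl fun l _ => ?_
    rw [mul_add, pow_add]
    ring
  · filter_upwards [Ioo_mem_nhdsLT zero_lt_one] with r hr
    have hr' : ‖(r : ℂ)‖ < 1 := by
      rw [Complex.norm_real, Real.norm_of_nonneg hr.1.le]; exact hr.2
    exact (hf.hasSum_mul_qNumber_pow_mul_pow hd.pos hq x n hr').tsum_eq.symm

/-- Equation (10): for `|q| < 1`, `d` odd, `χ` `d`-periodic, `x, n ∈ ℕ`,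
`2 ∑_{m≥0} χ(m)(−1)^m [m+x]_q^n
  = (2/(1−q)^n) ∑_{a<d} χ(a)(−1)^a ∑_{l≤n} C(n,l)(−1)^l q^{l(a+x)}/(1+q^{ld})`,
the series being understood in the Abel sense. -/
theorem q_euler_series_eq (q : ℂ) (hq : ‖q‖ < 1) (d : ℕ) (hd : Odd d) (hd0 : 0 < d)
    (χ : ℕ → ℂ) (hχ : ∀ m, χ (m + d) = χ m) (x n : ℕ) :
    HasAbelSum (fun m => 2 * χ m * (-1 : ℂ) ^ m * ((1 - q ^ (m + x)) / (1 - q)) ^ n)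
      ((2 / (1 - q) ^ n) * ∑ a ∈ Finset.range d, χ a * (-1 : ℂ) ^ a *
        ∑ l ∈ Finset.range (n + 1),
          (n.choose l : ℂ) * (-1 : ℂ) ^ l * q ^ (l * (a + x)) / (1 + q ^ (l * d))) :=
  q_euler_series_eq_general q hq d hd χ hχ x n
end

section
/- For q ∈ ℂ with |q| < 1, an odd positive integer d, a natural number k ≥ 1, a natural number x, and n ∈ ℕ: (2^k/(1−q)^n) ∑_{a_1,…,a_k=0}^{d−1} (∏_{i=1}^k χ(a_i)) (−1)^{a_1+⋯+a_k} ∑_{l=0}^n C(n,l)(−1)^l q^{l(x + a_1+⋯+a_k)} / (1+q^{dl})^k = 2^k ∑_{a_1,…,a_k=0}^{d−1} (∏_{i=1}^k χ(a_i)) (−1)^{a_1+⋯+a_k} ∑_{m=0}^∞ C(m+k−1, m) (−1)^m [x + a_1+⋯+a_k + dm]_q^n, where χ : ℕ → ℂ is any d-periodic function. -/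
open Filter Finset

/-!
Damp the `m`-series by `ρ^m` with `‖ρ‖ < 1`. Expanding `[z + dm]_q^n` binomially in `q^{dm}` turns
each of the finitely many pieces into a negative binomial series
`∑_m C(m+k−1, m) (−q^{dl} ρ)^m = (1 + q^{dl} ρ)^{−k}`, so the damped series sums to a rational
function of `ρ` whose denominators `1 + q^{dl}` do not vanish at `ρ = 1`; its value there is the
Abel sum.
-/

theorem one_sub_pow_eq_sum {R : Type*} [CommRing R] (y : R) (n : ℕ) :
    (1 - y) ^ n = ∑ l ∈ range (n + 1), (n.choose l : R) * (-1) ^ l * y ^ l := by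
  rw [sub_eq_neg_add, add_pow]
  exact sum_congr rfl fun l _ => by rw [one_pow, neg_pow]; ring

section NormedField

variable {𝕜 : Type*} [NormedField 𝕜]

theorem hasSum_choose_add_sub_one_mul_neg_pow (k : ℕ) {w : 𝕜} (hw : ‖w‖ < 1) :
    HasSum (fun m : ℕ => ((m + k - 1).choose m : 𝕜) * (-w) ^ m) (1 / (1 + w) ^ k) := by
  rcases k with _ | k
  -- for `k = 0` the truncated `m - 1` leaves only the term `m = 0`
  · convert hasSum_ite_eq 0 (1 : 𝕜) using 2 with m
    · rcases m with _ | m <;> simp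
    · simp
  · convert hasSum_choose_mul_geometric_of_norm_lt_one k (r := -w) (by rwa [norm_neg])
      using 3 with m
    · rw [Nat.add_succ_sub_one, Nat.choose_symm_add]
    · rw [sub_neg_eq_add]

theorem hasSum_choose_mul_qBracket_pow {q ρ : 𝕜} (hq : ‖q‖ ≤ 1) (hρ : ‖ρ‖ < 1) (z d k n : ℕ) :
    HasSum (fun m : ℕ => ((m + k - 1).choose m : 𝕜) * (-1) ^ m *
        ((1 - q ^ (z + d * m)) / (1 - q)) ^ n * ρ ^ m)
      ((∑ l ∈ range (n + 1),
          (n.choose l : 𝕜) * (-1) ^ l * q ^ (l * z) / (1 + q ^ (d * l) * ρ) ^ k) / (1 - q) ^ n) := by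
  have hnorm (l : ℕ) : ‖q ^ (d * l) * ρ‖ < 1 := by
    rw [norm_mul, norm_pow]
    exact lt_of_le_of_lt (mul_le_of_le_one_left (norm_nonneg ρ) (pow_le_one₀ (norm_nonneg q) hq)) hρ
  have hl := hasSum_sum (s := range (n + 1)) fun l _ =>
    (hasSum_choose_add_sub_one_mul_neg_pow k (hnorm l)).mul_left
      ((n.choose l : 𝕜) * (-1) ^ l * q ^ (l * z) / (1 - q) ^ n)
  convert hl using 1
  · rfl
  · funext m
    rw [div_pow, one_sub_pow_eq_sum, sum_div, mul_sum, sum_mul]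
    refine sum_congr rfl fun l _ => ?_
    ring
  · rw [sum_div]
    exact sum_congr rfl fun l _ => by ring

end NormedField

theorem one_add_pow_ne_zero_of_norm_lt_one {q : ℂ} (hq : ‖q‖ < 1) (N : ℕ) : 1 + q ^ N ≠ 0 := by
  intro h
  rcases N.eq_zero_or_pos with rfl | hN
  · norm_num at h
  · have hlt : ‖q ^ N‖ < 1 := by
      rw [norm_pow]
      exact pow_lt_one₀ (norm_nonneg q) hq hN.ne'
    rw [eq_neg_of_add_eq_zero_right h, norm_neg, norm_one] at hlt
    exact lt_irrefl _ hlt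

theorem HasAbelSum.of_hasSum_of_continuousAt {a : ℕ → ℂ} {F : ℂ → ℂ} {S : ℂ}
    (hF : ∀ ρ : ℂ, ‖ρ‖ < 1 → HasSum (fun m => a m * ρ ^ m) (F ρ)) (hc : ContinuousAt F 1)
    (hS : F 1 = S) : HasAbelSum a S := by
  have hlim : Tendsto (fun r : ℝ => F r) (nhdsWithin 1 (Set.Iio 1)) (nhds S) := by
    rw [← hS]
    refine (hc.tendsto.comp ?_).mono_left nhdsWithin_le_nhds
    simpa using Complex.continuous_ofReal.tendsto 1
  refine hlim.congr' ?_
  filter_upwards [Ioo_mem_nhdsLT_of_mem (show (1 : ℝ) ∈ Set.Ioc 0 1 by norm_num)] with r hr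
  refine ((hF r ?_).tsum_eq).symm
  rw [Complex.norm_real, Real.norm_of_nonneg hr.1.le]
  exact hr.2

theorem higher_order_q_euler_two_forms_general (q : ℂ) (hq : ‖q‖ < 1)
    (d : ℕ) (k : ℕ) (χ : ℕ → ℂ) (x n : ℕ) :
    HasAbelSum
      (fun m => 2 ^ k * ∑ a : Fin k → Fin d,
        (∏ i, χ (a i)) * (-1 : ℂ) ^ (∑ j, (a j : ℕ)) *
          ((m + k - 1).choose m : ℂ) * (-1 : ℂ) ^ m *
            ((1 - q ^ (x + (∑ j, (a j : ℕ)) + d * m)) / (1 - q)) ^ n)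
      ((2 ^ k / (1 - q) ^ n) * ∑ a : Fin k → Fin d,
        (∏ i, χ (a i)) * (-1 : ℂ) ^ (∑ j, (a j : ℕ)) *
          ∑ l ∈ Finset.range (n + 1),
            (n.choose l : ℂ) * (-1 : ℂ) ^ l * q ^ (l * (x + ∑ j, (a j : ℕ))) /
              (1 + q ^ (d * l)) ^ k) := by
  refine HasAbelSum.of_hasSum_of_continuousAt (F := fun ρ => (2 ^ k / (1 - q) ^ n) *
    ∑ a : Fin k → Fin d, (∏ i, χ (a i)) * (-1 : ℂ) ^ (∑ j, (a j : ℕ)) *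
      ∑ l ∈ range (n + 1), (n.choose l : ℂ) * (-1 : ℂ) ^ l * q ^ (l * (x + ∑ j, (a j : ℕ))) /
        (1 + q ^ (d * l) * ρ) ^ k) (fun ρ hρ => ?_) ?_ (by simp only [mul_one])
  · have hsum := (hasSum_sum (s := univ) fun (a : Fin k → Fin d) _ =>
      (hasSum_choose_mul_qBracket_pow hq.le hρ (x + ∑ j, (a j : ℕ)) d k n).mul_left
        ((∏ i, χ (a i)) * (-1 : ℂ) ^ (∑ j, (a j : ℕ)))).mul_left ((2 : ℂ) ^ k)
    convert hsum using 1
    · rfl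
    · funext m
      rw [mul_assoc, sum_mul]
      exact congrArg _ (sum_congr rfl fun a _ => by ring)
    · rw [mul_sum, mul_sum]
      exact sum_congr rfl fun a _ => by ring
  · have hden (l : ℕ) : (1 + q ^ (d * l) * 1) ^ k ≠ 0 :=
      pow_ne_zero k (by simpa using one_add_pow_ne_zero_of_norm_lt_one hq (d * l))
    fun_prop (disch := exact hden _)

/-- Theorem 1: the two expressions for `E_{n,χ,q}^{(k)}(x)` agree, the infinite series over `m`
(with negative-binomial coefficients `C(m+k−1,m)`) being understood in the Abel sense:
`(2^k/(1−q)^n) ∑_{a⃗∈[0,d)^k} (∏χ(aᵢ))(−1)^{Σa} ∑_{l≤n} C(n,l)(−1)^l q^{l(x+Σa)}/(1+q^{dl})^k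
 = 2^k ∑_{a⃗} (∏χ(aᵢ))(−1)^{Σa} ∑_{m≥0} C(m+k−1,m)(−1)^m [x+Σa+dm]_q^n`. -/
theorem higher_order_q_euler_two_forms (q : ℂ) (hq : ‖q‖ < 1)
    (d : ℕ) (hd : Odd d) (hd0 : 0 < d) (k : ℕ) (hk : 1 ≤ k)
    (χ : ℕ → ℂ) (hχ : ∀ m, χ (m + d) = χ m) (x n : ℕ) :
    HasAbelSum
      (fun m => 2 ^ k * ∑ a : Fin k → Fin d,
        (∏ i, χ (a i)) * (-1 : ℂ) ^ (∑ j, (a j : ℕ)) *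
          ((m + k - 1).choose m : ℂ) * (-1 : ℂ) ^ m *
            ((1 - q ^ (x + (∑ j, (a j : ℕ)) + d * m)) / (1 - q)) ^ n)
      ((2 ^ k / (1 - q) ^ n) * ∑ a : Fin k → Fin d,
        (∏ i, χ (a i)) * (-1 : ℂ) ^ (∑ j, (a j : ℕ)) *
          ∑ l ∈ Finset.range (n + 1),
            (n.choose l : ℂ) * (-1 : ℂ) ^ l * q ^ (l * (x + ∑ j, (a j : ℕ))) /
              (1 + q ^ (d * l)) ^ k) :=
  higher_order_q_euler_two_forms_general q hq d k χ x n
end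

section
/- For q ∈ ℂ with |q| < 1, integers h ∈ ℤ, k ≥ 1, an odd positive integer d, a d-periodic function χ : ℕ → ℂ, a natural number x, and n ∈ ℕ, the two expressions for E_{n,χ,q}^{(h,k)}(x) agree: ∑_{a_1,…,a_k=0}^{d−1} (∏ χ(a_i)) (−1)^{∑ a_j} q^{∑_j (h−j) a_j} · (2^k/(1−q)^n) ∑_{l=0}^n C(n,l)(−1)^l q^{l(x+∑ a_j)} / (−q^{d(h−k+l)} : q^d)_k = 2^k [d]_q^n ∑_{m=0}^∞ qbinom(m+k−1, m; q^d) (−1)^m q^{d(h−k)m} ∑_{a_1,…,a_k=0}^{d−1} (∏ χ(a_i)) (−1)^{∑ a_j} q^{∑_j (h−j) a_j} [m + (x + ∑_j a_j)/d]_{q^d}^n, provided h − k + l ≥ 0 for all 0 ≤ l ≤ n so all denominators are nonzero (e.g., h ≥ k). -/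
open Filter Finset

noncomputable def qbinom (q : ℂ) (n k : ℕ) : ℂ :=
  (∏ i ∈ Finset.range k, (1 - q ^ (n - i))) / ∏ i ∈ Finset.range k, (1 - q ^ (i + 1))

/-!
Expanding `[m + y/d]_{q^d}^n = ((1 - q^{dm+y}) / (1 - q^d))^n` binomially writes the `m`-th term
as a finite combination, over `l ≤ n`, of the q-negative-binomial series
`∑ₘ qbinom(m+k-1, m; q^d) (-w)^m` with `w = q^{d(h-k+l)}`. For `0 < r < 1` the
q-negative-binomial theorem sums this series at `r w` to `1 / (-r w; q^d)_k`, which is continuous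
up to `r = 1`; this gives the Abel sum even for `w = 1`, where the series itself diverges.
-/

open Topology

lemma one_sub_ne_zero_of_norm_lt_one {R : Type*} [NormedRing R] [NormOneClass R] {u : R}
    (hu : ‖u‖ < 1) : 1 - u ≠ 0 := fun h => by
  rw [← sub_eq_zero.1 h, norm_one] at hu
  exact lt_irrefl 1 hu

lemma pow_ne_neg_one_of_norm_lt_one {q : ℂ} (hq : ‖q‖ < 1) (E : ℕ) : q ^ E ≠ -1 := by
  rcases E.eq_zero_or_pos with rfl | hE
  · norm_num
  · intro h
    have := pow_lt_one₀ (norm_nonneg q) hq hE.ne'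
    rw [← norm_pow, h, norm_neg, norm_one] at this
    exact lt_irrefl 1 this

section QBinom

variable {Q : ℂ}

lemma prod_one_sub_pow_succ_ne_zero (hQ : ‖Q‖ < 1) (k : ℕ) :
    ∏ i ∈ range k, (1 - Q ^ (i + 1)) ≠ 0 :=
  prod_ne_zero_iff.2 fun i _ => one_sub_ne_zero_of_norm_lt_one <| by
    rw [norm_pow]; exact pow_lt_one₀ (norm_nonneg Q) hQ i.succ_ne_zero

@[simp] lemma qbinom_zero_right (n : ℕ) : qbinom Q n 0 = 1 := by simp [qbinom]

lemma qbinom_self (hQ : ‖Q‖ < 1) (m : ℕ) : qbinom Q m m = 1 := by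
  have hreflect : ∏ i ∈ range m, (1 - Q ^ (m - i)) = ∏ i ∈ range m, (1 - Q ^ (i + 1)) := by
    rw [← prod_range_reflect (fun i => 1 - Q ^ (i + 1)) m]
    exact prod_congr rfl fun i hi => by rw [mem_range] at hi; congr 2; omega
  rw [qbinom, hreflect, div_self (prod_one_sub_pow_succ_ne_zero hQ m)]

lemma qbinom_succ_succ (hQ : ‖Q‖ < 1) {n j : ℕ} (hjn : j ≤ n) :
    qbinom Q (n + 1) (j + 1) = qbinom Q n (j + 1) + Q ^ (n - j) * qbinom Q n j := by
  have hnum : ∏ i ∈ range (j + 1), (1 - Q ^ (n + 1 - i))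
      = (∏ i ∈ range j, (1 - Q ^ (n - i))) * (1 - Q ^ (n + 1)) := by
    rw [prod_range_succ']
    exact congrArg₂ _ (prod_congr rfl fun i _ => by congr 2; omega) rfl
  have hpow : Q ^ (n - j) * Q ^ (j + 1) = Q ^ (n + 1) := by rw [← pow_add]; congr 1; omega
  have hden := prod_one_sub_pow_succ_ne_zero hQ (j + 1)
  rw [prod_range_succ] at hden
  simp only [qbinom, hnum, prod_range_succ, ← hpow]
  field_simp [left_ne_zero_of_mul hden, right_ne_zero_of_mul hden]
  ring

lemma qbinom_add_succ_succ (hQ : ‖Q‖ < 1) (m k : ℕ) :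
    qbinom Q (m + 1 + (k + 1)) (m + 1)
      = qbinom Q (m + 1 + k) (m + 1) + Q ^ (k + 1) * qbinom Q (m + (k + 1)) m := by
  rw [show m + 1 + (k + 1) = m + k + 1 + 1 by omega, show m + 1 + k = m + k + 1 by omega,
    show m + (k + 1) = m + k + 1 by omega, qbinom_succ_succ hQ (by omega : m ≤ m + k + 1),
    show m + k + 1 - m = k + 1 by omega]

lemma exists_norm_qbinom_add_le (hQ : ‖Q‖ < 1) (k : ℕ) :
    ∃ M, ∀ m, ‖qbinom Q (m + k) m‖ ≤ M := by
  induction k with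
  | zero => exact ⟨1, fun m => by rw [Nat.add_zero, qbinom_self hQ, norm_one]⟩
  | succ k ih =>
    obtain ⟨M, hM⟩ := ih
    have hM1 : 1 ≤ M := by simpa using hM 0
    set ρ := ‖Q‖ ^ (k + 1)
    have hρ : ρ < 1 := pow_lt_one₀ (norm_nonneg Q) hQ k.succ_ne_zero
    have hρ0 : 0 ≤ ρ := by positivity
    refine ⟨M / (1 - ρ), fun m => ?_⟩
    induction m with
    | zero =>
      rw [Nat.zero_add, qbinom_zero_right, norm_one, le_div_iff₀ (by linarith)]
      nlinarith
    | succ m ihm =>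
      rw [qbinom_add_succ_succ hQ]
      calc ‖qbinom Q (m + 1 + k) (m + 1) + Q ^ (k + 1) * qbinom Q (m + (k + 1)) m‖
          ≤ M + ρ * (M / (1 - ρ)) := by
            refine (norm_add_le _ _).trans (add_le_add (hM _) ?_)
            rw [norm_mul, norm_pow]
            exact mul_le_mul_of_nonneg_left ihm hρ0
        _ = M / (1 - ρ) := by field_simp [(by linarith : (1 - ρ) ≠ 0)]; ring

/-- The q-negative-binomial theorem. -/
theorem hasSum_qbinom_mul_pow (hQ : ‖Q‖ < 1) {z : ℂ} (hz : ‖z‖ < 1) (k : ℕ) :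
    HasSum (fun m => qbinom Q (m + k) m * z ^ m) (∏ j ∈ range (k + 1), (1 - z * Q ^ j))⁻¹ := by
  induction k with
  | zero =>
    simpa [qbinom_self hQ] using hasSum_geometric_of_norm_lt_one hz
  | succ k ih =>
    set b : ℕ → ℂ := fun m => qbinom Q (m + (k + 1)) m * z ^ m
    obtain ⟨M, hM⟩ := exists_norm_qbinom_add_le hQ (k + 1)
    have hb : HasSum b (∑' m, b m) := by
      refine (Summable.of_norm_bounded
        ((summable_geometric_of_lt_one (norm_nonneg z) hz).mul_left M) fun m => ?_).hasSum
      rw [norm_mul, norm_pow]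
      exact mul_le_mul_of_nonneg_right (hM m) (by positivity)
    set B := ∑' m, b m
    set T := (∏ j ∈ range (k + 1), (1 - z * Q ^ j))⁻¹
    -- Pascal's rule: `b (m + 1)` is the shifted series for `k` plus `Q^(k+1) z b m`.
    have hshift : HasSum (fun m => b (m + 1)) (T - 1 + Q ^ (k + 1) * z * B) := by
      have ih1 := (hasSum_nat_add_iff' 1).2 ih
      simp only [range_one, sum_singleton, qbinom_zero_right, pow_zero, mul_one] at ih1
      refine (ih1.add (hb.mul_left (Q ^ (k + 1) * z))).congr_fun fun m => ?_
      simp only [b, qbinom_add_succ_succ hQ]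
      ring
    have hshift' : HasSum (fun m => b (m + 1)) (B - 1) := by
      simpa [b] using (hasSum_nat_add_iff' 1).2 hb
    have hB : B - 1 = T - 1 + Q ^ (k + 1) * z * B := hshift'.unique hshift
    have hne : 1 - z * Q ^ (k + 1) ≠ 0 := one_sub_ne_zero_of_norm_lt_one <| by
      rw [norm_mul, norm_pow]
      exact mul_lt_one_of_nonneg_of_lt_one_left (norm_nonneg z) hz
        (pow_le_one₀ (norm_nonneg Q) hQ.le)
    have hBT : B = T * (1 - z * Q ^ (k + 1))⁻¹ := by
      field_simp
      linear_combination hB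
    rwa [prod_range_succ, mul_inv, ← hBT]

end QBinom

theorem HasAbelSum.of_eventually_hasSum {a : ℕ → ℂ} {S : ℂ} {F : ℝ → ℂ}
    (h : ∀ᶠ r : ℝ in 𝓝[<] 1, HasSum (fun m => a m * (r : ℂ) ^ m) (F r))
    (hF : Tendsto F (𝓝[<] (1 : ℝ)) (𝓝 S)) : HasAbelSum a S :=
  hF.congr' (h.mono fun _ hr => hr.tsum_eq.symm)

theorem HasAbelSum.finsetSum_mul_left {ι : Type*} (s : Finset ι) (c : ι → ℂ)
    {a : ι → ℕ → ℂ} {S : ι → ℂ} (h : ∀ i ∈ s, HasAbelSum (a i) (S i))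
    (hs : ∀ i ∈ s, ∀ᶠ r : ℝ in 𝓝[<] 1, Summable fun m => a i m * (r : ℂ) ^ m) :
    HasAbelSum (fun m => ∑ i ∈ s, c i * a i m) (∑ i ∈ s, c i * S i) := by
  refine (tendsto_finsetSum s fun i hi => (h i hi).const_mul (c i)).congr' ?_
  filter_upwards [(eventually_all_finset s).2 hs] with r hr
  simp only [sum_mul, mul_assoc]
  rw [Summable.tsum_finsetSum fun i hi => (hr i hi).mul_left (c i)]
  simp only [tsum_mul_left]

section QNegativeBinomial

variable {Q w : ℂ}

lemma eventually_hasSum_qbinom_mul_neg_pow (hQ : ‖Q‖ < 1) (hw : ‖w‖ ≤ 1) (k : ℕ) :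
    ∀ᶠ r : ℝ in 𝓝[<] 1, HasSum (fun m => qbinom Q (m + k) m * (-w) ^ m * (r : ℂ) ^ m)
      (∏ j ∈ range (k + 1), (1 + w * r * Q ^ j))⁻¹ := by
  filter_upwards [Ioo_mem_nhdsLT (zero_lt_one' ℝ)] with r hr
  have hz : ‖-(w * r)‖ < 1 := by
    rw [norm_neg, norm_mul, Complex.norm_real, Real.norm_of_nonneg hr.1.le]
    exact mul_lt_one_of_nonneg_of_lt_one_right hw hr.1.le hr.2
  simpa [mul_assoc, ← mul_pow, neg_mul] using hasSum_qbinom_mul_pow hQ hz k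

theorem hasAbelSum_qbinom_mul_neg_pow (hQ : ‖Q‖ < 1) (hw : ‖w‖ ≤ 1) (hw1 : w ≠ -1) (k : ℕ) :
    HasAbelSum (fun m => qbinom Q (m + k) m * (-w) ^ m)
      (∏ j ∈ range (k + 1), (1 + w * Q ^ j))⁻¹ := by
  refine .of_eventually_hasSum (eventually_hasSum_qbinom_mul_neg_pow hQ hw k) ?_
  have hne : ∏ j ∈ range (k + 1), (1 + w * Q ^ j) ≠ 0 := by
    refine prod_ne_zero_iff.2 fun j _ => ?_
    rcases j.eq_zero_or_pos with rfl | hj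
    · simpa [add_eq_zero_iff_eq_neg'] using hw1
    · rw [← sub_neg_eq_add]
      refine one_sub_ne_zero_of_norm_lt_one ?_
      rw [norm_neg, norm_mul, norm_pow]
      exact mul_lt_one_of_nonneg_of_lt_one_right hw (by positivity)
        (pow_lt_one₀ (norm_nonneg Q) hQ hj.ne')
  have hcont : Continuous fun r : ℝ => ∏ j ∈ range (k + 1), (1 + w * r * Q ^ j) := by fun_prop
  simpa using ((hcont.tendsto 1).mono_left nhdsWithin_le_nhds).inv₀ (by simpa using hne)

end QNegativeBinomial

lemma one_sub_pow_mul_add_pow_eq_sum (q : ℂ) (d m y n : ℕ) :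
    (1 - q ^ (d * m + y)) ^ n
      = ∑ l ∈ range (n + 1), n.choose l * (-1) ^ l * q ^ (l * y) * (q ^ (d * l)) ^ m := by
  rw [sub_eq_neg_add, add_pow]
  exact sum_congr rfl fun l _ => by ring

theorem hasAbelSum_qEuler_two_forms {α : Type*} {q : ℂ} (hq : ‖q‖ < 1) {d : ℕ} (hd0 : 0 < d)
    (c : ℂ) (k e x n : ℕ) (t : Finset α) (W : α → ℂ) (s : α → ℕ) :
    HasAbelSum
      (fun m => c * ((1 - q ^ d) / (1 - q)) ^ n * qbinom (q ^ d) (m + k) m * (-1 : ℂ) ^ m *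
        q ^ (d * e * m) * ∑ a ∈ t, W a * ((1 - q ^ (d * m + x + s a)) / (1 - q ^ d)) ^ n)
      (∑ a ∈ t, W a * ((c / (1 - q) ^ n) *
        ∑ l ∈ range (n + 1), (n.choose l : ℂ) * (-1 : ℂ) ^ l * q ^ (l * (x + s a)) /
          ∏ j ∈ range (k + 1), (1 + q ^ (d * (e + l)) * (q ^ d) ^ j))) := by
  have hQ : ‖q ^ d‖ < 1 := by rw [norm_pow]; exact pow_lt_one₀ (norm_nonneg q) hq hd0.ne'
  have hQ1 : 1 - q ^ d ≠ 0 := one_sub_ne_zero_of_norm_lt_one hQ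
  have hw (l : ℕ) : ‖q ^ (d * (e + l))‖ ≤ 1 := by
    rw [norm_pow]; exact pow_le_one₀ (norm_nonneg q) hq.le
  set coeff : ℕ → ℂ := fun l =>
    ∑ a ∈ t, W a * (c / (1 - q) ^ n * (n.choose l * (-1) ^ l * q ^ (l * (x + s a))))
  have key := HasAbelSum.finsetSum_mul_left (range (n + 1)) coeff
    (fun l _ => hasAbelSum_qbinom_mul_neg_pow hQ (hw l) (pow_ne_neg_one_of_norm_lt_one hq _) k)
    (fun l _ => (eventually_hasSum_qbinom_mul_neg_pow hQ (hw l) k).mono fun _ hr => hr.summable)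
  convert key using 1
  · funext m
    simp only [coeff, sum_mul, add_assoc, div_pow, one_sub_pow_mul_add_pow_eq_sum, sum_div,
      mul_sum]
    rw [sum_comm]
    refine sum_congr rfl fun a _ => sum_congr rfl fun l _ => ?_
    field_simp
    ring
  · simp only [coeff, sum_mul, mul_sum, div_eq_mul_inv]
    rw [sum_comm]
    exact sum_congr rfl fun a _ => sum_congr rfl fun l _ => by ring

theorem higher_order_hk_q_euler_two_forms_general (q : ℂ) (hq : ‖q‖ < 1)
    (d : ℕ) (hd0 : 0 < d) (k h : ℕ) (hk : 1 ≤ k)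
    (χ : ℕ → ℂ) (x n : ℕ) :
    HasAbelSum
      (fun m => 2 ^ k * ((1 - q ^ d) / (1 - q)) ^ n *
        qbinom (q ^ d) (m + k - 1) m * (-1 : ℂ) ^ m * q ^ (d * (h - k) * m) *
          ∑ a : Fin k → Fin d,
            (∏ i, χ (a i)) * (-1 : ℂ) ^ (∑ j, (a j : ℕ)) *
              q ^ (∑ j : Fin k, (h - ((j : ℕ) + 1)) * (a j : ℕ)) *
                ((1 - q ^ (d * m + x + ∑ j, (a j : ℕ))) / (1 - q ^ d)) ^ n)
      (∑ a : Fin k → Fin d,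
        (∏ i, χ (a i)) * (-1 : ℂ) ^ (∑ j, (a j : ℕ)) *
          q ^ (∑ j : Fin k, (h - ((j : ℕ) + 1)) * (a j : ℕ)) *
            ((2 ^ k / (1 - q) ^ n) *
              ∑ l ∈ Finset.range (n + 1),
                (n.choose l : ℂ) * (-1 : ℂ) ^ l * q ^ (l * (x + ∑ j, (a j : ℕ))) /
                  ∏ j ∈ Finset.range k, (1 + q ^ (d * (h - k + l)) * (q ^ d) ^ j))) := by
  obtain ⟨k, rfl⟩ := Nat.exists_eq_add_of_le' hk
  simp only [Nat.add_succ_sub_one]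
  exact hasAbelSum_qEuler_two_forms hq hd0 (2 ^ (k + 1)) k (h - (k + 1)) x n univ
    (fun a : Fin (k + 1) → Fin d => (∏ i, χ (a i)) * (-1 : ℂ) ^ (∑ j, (a j : ℕ)) *
      q ^ (∑ j : Fin (k + 1), (h - ((j : ℕ) + 1)) * (a j : ℕ)))
    (fun a => ∑ j, (a j : ℕ))

/-- Theorem 2: the two expressions for `E_{n,χ,q}^{(h,k)}(x)` agree (with `h ≥ k`, so that all
exponents `d(h−k+l)` are nonnegative and the denominators `(−q^{d(h−k+l)} : q^d)_k` nonzero):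
the series
`2^k [d]_q^n ∑_m qbinom(m+k−1,m;q^d)(−1)^m q^{d(h−k)m}
   ∑_{a⃗} (∏χ(aᵢ))(−1)^{Σa} q^{Σ(h−j)a_j} [m+(x+Σa)/d]_{q^d}^n`
Abel-sums to
`∑_{a⃗} (∏χ(aᵢ))(−1)^{Σa} q^{Σ(h−j)a_j} (2^k/(1−q)^n)
   ∑_{l≤n} C(n,l)(−1)^l q^{l(x+Σa)}/(−q^{d(h−k+l)} : q^d)_k`,
where `(q^d)^{m+(x+Σa)/d} = q^{dm+x+Σa}`. -/
theorem higher_order_hk_q_euler_two_forms (q : ℂ) (hq : ‖q‖ < 1)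
    (d : ℕ) (hd : Odd d) (hd0 : 0 < d) (k h : ℕ) (hk : 1 ≤ k) (hh : k ≤ h)
    (χ : ℕ → ℂ) (hχ : ∀ m, χ (m + d) = χ m) (x n : ℕ) :
    HasAbelSum
      (fun m => 2 ^ k * ((1 - q ^ d) / (1 - q)) ^ n *
        qbinom (q ^ d) (m + k - 1) m * (-1 : ℂ) ^ m * q ^ (d * (h - k) * m) *
          ∑ a : Fin k → Fin d,
            (∏ i, χ (a i)) * (-1 : ℂ) ^ (∑ j, (a j : ℕ)) *
              q ^ (∑ j : Fin k, (h - ((j : ℕ) + 1)) * (a j : ℕ)) *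
                ((1 - q ^ (d * m + x + ∑ j, (a j : ℕ))) / (1 - q ^ d)) ^ n)
      (∑ a : Fin k → Fin d,
        (∏ i, χ (a i)) * (-1 : ℂ) ^ (∑ j, (a j : ℕ)) *
          q ^ (∑ j : Fin k, (h - ((j : ℕ) + 1)) * (a j : ℕ)) *
            ((2 ^ k / (1 - q) ^ n) *
              ∑ l ∈ Finset.range (n + 1),
                (n.choose l : ℂ) * (-1 : ℂ) ^ l * q ^ (l * (x + ∑ j, (a j : ℕ))) /
                  ∏ j ∈ Finset.range k, (1 + q ^ (d * (h - k + l)) * (q ^ d) ^ j))) :=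
  higher_order_hk_q_euler_two_forms_general q hq d hd0 k h hk χ x n
end

section
/- Let q ∈ ℂ with |q| < 1, k ≥ 1, d odd, χ : ℕ → ℂ d-periodic, x ∈ ℕ, and m ∈ ℕ with m ≥ k. Define E_{l,χ,q}^{(0,k)}(x) = 2^k ∑_{m_1,…,m_k=0}^∞ (∏_{j=1}^k χ(m_j)(−1)^{m_j} q^{−j m_j}) [x+m_1+⋯+m_k]_q^l, assuming the series converges (e.g. interpret it as the finite-sum formula from Theorem 2 with h = 0). Then 2^k q^{mx} ∑_{a_1,…,a_k=0}^{d−1} (∏_j χ(a_j)) q^{∑_j (m−j)a_j} (−1)^{∑_j a_j} / (−q^{d(m−k)} : q^d)_k = ∑_{l=0}^m C(m,l) (q−1)^l E_{l,χ,q}^{(0,k)}(x), where E_{l,χ,q}^{(0,k)}(x) is given by its closed finite-sum expression ∑_{a_1,…,a_k=0}^{d−1}(∏χ(a_i))(−1)^{∑a_j} q^{−∑_j j a_j} (2^k/(1−q)^l) ∑_{i=0}^l C(l,i)(−1)^i q^{i(x+∑ a_j)}/(−q^{d(i−k)} : q^d)_k. -/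
/-!
Fix a tuple `a` and put `g i = q^{i(x + Σ a_j)} / (−q^{d(i−k)} : q^d)_k`. In the closed form
of `E_l`, the inner sum `∑_i C(l,i) (−1)^i g i` is `(−1)^l Δ^l g(0)`, and
`(q − 1)^l / (1 − q)^l = (−1)^l`, so the right-hand side collapses to
`2^k ∑_l C(m,l) Δ^l g(0) = 2^k g(m)` by Newton's forward difference formula. The remaining
factor `q^{m(x + Σ a_j)} q^{−Σ j a_j}` is `q^{mx} q^{Σ (m−j) a_j}`.
-/

open Finset

theorem sum_choose_mul_neg_one_pow_mul_sum_choose {R : Type*} [CommRing R] (f : ℕ → R)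
    (m : ℕ) :
    ∑ l ∈ range (m + 1), (m.choose l : R) * (-1) ^ l *
      ∑ i ∈ range (l + 1), (l.choose i : R) * (-1) ^ i * f i = f m := by
  have hf := shift_eq_sum_fwdDiff_iter 1 f m 0
  simp only [zero_add, smul_eq_mul, mul_one, fwdDiff_iter_eq_sum_shift, zsmul_eq_mul] at hf
  rw [hf]
  refine sum_congr rfl fun l _ => ?_
  rw [nsmul_eq_mul, mul_assoc, mul_sum]
  congr 1
  refine sum_congr rfl fun i hi => ?_
  have hsign : (-1 : R) ^ l = (-1) ^ (l - i) * (-1) ^ i := by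
    rw [← pow_add, Nat.sub_add_cancel (Nat.lt_succ_iff.mp (mem_range.mp hi))]
  have hsq : ((-1 : R) ^ i) ^ 2 = 1 := by rw [← pow_mul, mul_comm, pow_mul, neg_one_sq, one_pow]
  rw [hsign]
  push_cast
  linear_combination (l.choose i : R) * (-1) ^ (l - i) * f i * hsq

theorem sum_choose_mul_sub_one_pow_mul_div_one_sub_pow {K : Type*} [Field K] {q : K} (hq : q ≠ 1)
    (c : K) (g : ℕ → K) (m : ℕ) :
    ∑ l ∈ range (m + 1), (m.choose l : K) * (q - 1) ^ l *
      (c / (1 - q) ^ l * ∑ i ∈ range (l + 1), (l.choose i : K) * (-1) ^ i * g i) = c * g m := by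
  have hq' : 1 - q ≠ 0 := sub_ne_zero.mpr hq.symm
  have hscale (l : ℕ) : (q - 1) ^ l * (c / (1 - q) ^ l) = c * (-1) ^ l := by
    rw [show q - 1 = -1 * (1 - q) by ring, mul_pow]
    field_simp
  calc _ = c * ∑ l ∈ range (m + 1), (m.choose l : K) * (-1) ^ l *
          ∑ i ∈ range (l + 1), (l.choose i : K) * (-1) ^ i * g i := by
        rw [mul_sum]
        refine sum_congr rfl fun l _ => ?_
        rw [mul_assoc, ← mul_assoc ((q - 1) ^ l), hscale]
        ring
    _ = c * g m := by rw [sum_choose_mul_neg_one_pow_mul_sum_choose]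

theorem sum_sub_succ_mul_add_sum_succ_mul {k m : ℕ} (hkm : k ≤ m) (a : Fin k → ℕ) :
    ∑ j : Fin k, (m - (j + 1)) * a j + ∑ j : Fin k, (j + 1) * a j = m * ∑ j, a j := by
  rw [← sum_add_distrib, mul_sum]
  refine sum_congr rfl fun j _ => ?_
  rw [← add_mul, Nat.sub_add_cancel (by omega)]

theorem pow_mul_mul_pow_sum_sub_succ_mul {G₀ : Type*} [GroupWithZero G₀] {q : G₀}
    (hq : q ≠ 0) {k m : ℕ} (hkm : k ≤ m) (a : Fin k → ℕ) (x : ℕ) :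
    q ^ (m * x) * q ^ (∑ j : Fin k, (m - (j + 1)) * a j) =
      q ^ (m * (x + ∑ j, a j)) * q ^ (-(∑ j : Fin k, (j + 1) * a j : ℕ) : ℤ) := by
  rw [zpow_neg, zpow_natCast, eq_mul_inv_iff_mul_eq₀ (pow_ne_zero _ hq), ← pow_add, ← pow_add,
    add_assoc, sum_sub_succ_mul_add_sum_succ_mul hkm, mul_add]

theorem q_power_moment_identity_general (q : ℂ) (hq : ‖q‖ < 1) (hq0 : q ≠ 0)
    (d : ℕ) (k : ℕ) (χ : ℕ → ℂ) (x m : ℕ) (hm : k ≤ m) :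
    2 ^ k * q ^ (m * x) *
        ∑ a : Fin k → Fin d,
          (∏ j, χ (a j)) * q ^ (∑ j : Fin k, (m - ((j : ℕ) + 1)) * (a j : ℕ)) *
            (-1 : ℂ) ^ (∑ j, (a j : ℕ)) /
              ∏ j ∈ Finset.range k, (1 + q ^ (d * (m - k)) * (q ^ d) ^ j) =
      ∑ l ∈ Finset.range (m + 1), (m.choose l : ℂ) * (q - 1) ^ l *
        ∑ a : Fin k → Fin d,
          (∏ i, χ (a i)) * (-1 : ℂ) ^ (∑ j, (a j : ℕ)) *
            q ^ (-(∑ j : Fin k, ((j : ℕ) + 1) * (a j : ℕ) : ℕ) : ℤ) *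
              ((2 ^ k / (1 - q) ^ l) *
                ∑ i ∈ Finset.range (l + 1),
                  (l.choose i : ℂ) * (-1 : ℂ) ^ i * q ^ (i * (x + ∑ j, (a j : ℕ))) /
                    ∏ j ∈ Finset.range k,
                      (1 + q ^ ((d : ℤ) * ((i : ℤ) - (k : ℤ))) * (q ^ d) ^ j)) := by
  have hq1 : q ≠ 1 := by rintro rfl; simp at hq
  set D : ℕ → ℂ := fun i =>
    ∏ j ∈ range k, (1 + q ^ ((d : ℤ) * ((i : ℤ) - (k : ℤ))) * (q ^ d) ^ j)
  have hDm : ∏ j ∈ range k, (1 + q ^ (d * (m - k)) * (q ^ d) ^ j) = D m := by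
    simp only [D, ← zpow_natCast q (d * (m - k)), Nat.cast_mul, Nat.cast_sub hm]
  simp only [mul_sum (s := univ)]
  rw [hDm, sum_comm]
  refine sum_congr rfl fun a _ => ?_
  set A := (∏ i, χ (a i)) * (-1 : ℂ) ^ (∑ j, (a j : ℕ)) *
    q ^ (-(∑ j : Fin k, ((j : ℕ) + 1) * (a j : ℕ) : ℕ) : ℤ)
  set Y := x + ∑ j, (a j : ℕ)
  calc _ = A * (2 ^ k * (q ^ (m * Y) / D m)) := by
        have hpow := pow_mul_mul_pow_sum_sub_succ_mul hq0 hm (fun j => (a j : ℕ)) x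
        beta_reduce at hpow
        linear_combination (2 ^ k * (∏ j, χ (a j)) * (-1) ^ (∑ j, (a j : ℕ)) / D m) * hpow
    _ = A * ∑ l ∈ range (m + 1), (m.choose l : ℂ) * (q - 1) ^ l *
          (2 ^ k / (1 - q) ^ l *
            ∑ i ∈ range (l + 1), (l.choose i : ℂ) * (-1) ^ i * (q ^ (i * Y) / D i)) := by
        rw [sum_choose_mul_sub_one_pow_mul_div_one_sub_pow hq1]
    _ = _ := by
        rw [mul_sum]
        refine sum_congr rfl fun l _ => ?_
        simp only [mul_div_assoc]
        ring

/-- Theorem 3: for `|q| < 1` (`q ≠ 0`), `k ≥ 1`, `d` odd, `χ` `d`-periodic, `x ∈ ℕ`,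
`m ≥ k`, and assuming the denominators `(−q^{d(i−k)} : q^d)_k` are nonzero,
`2^k q^{mx} ∑_{a⃗∈[0,d)^k} (∏χ(a_j)) q^{Σ(m−j)a_j} (−1)^{Σa} / (−q^{d(m−k)} : q^d)_k
  = ∑_{l≤m} C(m,l)(q−1)^l E_{l,χ,q}^{(0,k)}(x)`,
where `E_{l,χ,q}^{(0,k)}(x)` is given by its closed finite-sum expression
`∑_{a⃗} (∏χ(aᵢ))(−1)^{Σa} q^{−Σ j a_j} (2^k/(1−q)^l)
   ∑_{i≤l} C(l,i)(−1)^i q^{i(x+Σa)}/(−q^{d(i−k)} : q^d)_k`. -/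
theorem q_power_moment_identity (q : ℂ) (hq : ‖q‖ < 1) (hq0 : q ≠ 0)
    (d : ℕ) (hd : Odd d) (hd0 : 0 < d) (k : ℕ) (hk : 1 ≤ k)
    (χ : ℕ → ℂ) (hχ : ∀ m, χ (m + d) = χ m) (x m : ℕ) (hm : k ≤ m)
    (hden : ∀ i : ℕ, i ≤ m →
      (∏ j ∈ Finset.range k,
        (1 + q ^ ((d : ℤ) * ((i : ℤ) - (k : ℤ))) * (q ^ d) ^ j)) ≠ 0) :
    2 ^ k * q ^ (m * x) *
        ∑ a : Fin k → Fin d,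
          (∏ j, χ (a j)) * q ^ (∑ j : Fin k, (m - ((j : ℕ) + 1)) * (a j : ℕ)) *
            (-1 : ℂ) ^ (∑ j, (a j : ℕ)) /
              ∏ j ∈ Finset.range k, (1 + q ^ (d * (m - k)) * (q ^ d) ^ j) =
      ∑ l ∈ Finset.range (m + 1), (m.choose l : ℂ) * (q - 1) ^ l *
        ∑ a : Fin k → Fin d,
          (∏ i, χ (a i)) * (-1 : ℂ) ^ (∑ j, (a j : ℕ)) *
            q ^ (-(∑ j : Fin k, ((j : ℕ) + 1) * (a j : ℕ) : ℕ) : ℤ) *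
              ((2 ^ k / (1 - q) ^ l) *
                ∑ i ∈ Finset.range (l + 1),
                  (l.choose i : ℂ) * (-1 : ℂ) ^ i * q ^ (i * (x + ∑ j, (a j : ℕ))) /
                    ∏ j ∈ Finset.range k,
                      (1 + q ^ ((d : ℤ) * ((i : ℤ) - (k : ℤ))) * (q ^ d) ^ j)) :=
  q_power_moment_identity_general q hq hq0 d k χ x m hm
end
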